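/- For all m ≥ 0 and x > 2m, c_{m,x} = 0; that is, there is no Ferrers diagram λ ⊆ ℕ^x with m + x + 1 elements containing μ_x and having reduced dimension x when x > 2m. -/

import Mathlib

/-- A Ferrers diagram in `ℕ^k`: a finite nonempty downward-closed subset of `Fin k → ℕ`. -/
def IsFerrers {k : ℕ} (F : Finset (Fin k → ℕ)) : Prop :=
  F.Nonempty ∧ ∀ a ∈ F, ∀ x : Fin k → ℕ, (∀ i, x i ≤ a i) → x ∈ F

/-- A Ferrers diagram is strict if every coordinate is used by some element. -/
def IsStrict {k : ℕ} (F : Finset (Fin k → ℕ)) : Prop :=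
  ∀ i : Fin k, ∃ a ∈ F, a i ≠ 0

/-- `numPart d n` = `p_d(n)`, the number of Ferrers diagrams in `ℕ^(d+1)` with `n` elements. -/
noncomputable def numPart (d n : ℕ) : ℕ :=
  Nat.card {F : Finset (Fin (d + 1) → ℕ) // IsFerrers F ∧ F.card = n}

/-- `Amat n r` = `a_{n,r}`, the number of strict Ferrers diagrams in `ℕ^r` with `n` elements. -/
noncomputable def Amat (n r : ℕ) : ℕ :=
  Nat.card {F : Finset (Fin r → ℕ) // IsFerrers F ∧ IsStrict F ∧ F.card = n}

/-- `mu r` = `μ_r = {0, e_1, …, e_r} ⊆ ℕ^r`. -/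
def mu (r : ℕ) : Finset (Fin r → ℕ) :=
  insert 0 (Finset.univ.image fun i => Pi.single i 1)

/-- The reduced dimension of a Ferrers diagram `F ⊆ ℕ^x` (containing `μ_x`): the number of
coordinates used by some element of `F \ μ_x`. -/
noncomputable def rdim {x : ℕ} (F : Finset (Fin x → ℕ)) : ℕ :=
  Nat.card {i : Fin x // ∃ a ∈ F \ mu x, a i ≠ 0}

/-- Two coordinates are touched by a common element of the skew diagram `σ`. -/
def Touches {x : ℕ} (σ : Finset (Fin x → ℕ)) (i j : Fin x) : Prop :=
  ∃ a ∈ σ, a i ≠ 0 ∧ a j ≠ 0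

/-- `B` is a block of the finest partition of `Fin x` compatible with `σ`,
i.e. an equivalence class of the equivalence relation generated by `Touches σ`. -/
def IsBlock {x : ℕ} (σ : Finset (Fin x → ℕ)) (B : Set (Fin x)) : Prop :=
  ∃ i : Fin x, B = {j | Relation.EqvGen (Touches σ) i j}

/-- The support of `a` is contained in `B`. -/
def SuppIn {x : ℕ} (a : Fin x → ℕ) (B : Set (Fin x)) : Prop :=
  ∀ i, a i ≠ 0 → i ∈ B

/-- The component of `σ` with block `B` is of type `σ₂`: `B = {i, j}` with `i ≠ j`, and the
elements of `σ` supported in `B` are exactly `{e_i + e_j}`. -/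
def IsSigma2 {x : ℕ} (σ : Finset (Fin x → ℕ)) (B : Set (Fin x)) : Prop :=
  ∃ i j : Fin x, i ≠ j ∧ B = {i, j} ∧
    {a ∈ (σ : Set (Fin x → ℕ)) | SuppIn a B} = {Pi.single i 1 + Pi.single j 1}

/-- `Cmat m x` = `c_{m,x}`. -/
noncomputable def Cmat (m x : ℕ) : ℕ :=
  Nat.card {F : Finset (Fin x → ℕ) //
    IsFerrers F ∧ mu x ⊆ F ∧ F.card = m + x + 1 ∧ rdim F = x}

/-- `Dmat m x` = `d_{m,x}`. -/
noncomputable def Dmat (m x : ℕ) : ℕ :=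
  Nat.card {F : Finset (Fin x → ℕ) //
    IsFerrers F ∧ mu x ⊆ F ∧ F.card = m + x + 1 ∧ rdim F = x ∧
      ∀ B : Set (Fin x), IsBlock (F \ mu x) B → ¬ IsSigma2 (F \ mu x) B}

/-- A point of type 1: `e_i + e_j` for some `i ≠ j`. -/
def IsType1 {r : ℕ} (a : Fin r → ℕ) : Prop :=
  ∃ i j : Fin r, i ≠ j ∧ a = Pi.single i 1 + Pi.single j 1

/-- A point of type 2: `2·e_i` for some `i`. -/
def IsType2 {r : ℕ} (a : Fin r → ℕ) : Prop :=
  ∃ i : Fin r, a = Pi.single i 2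

/-- `Fmat n r` = `f_{n,r}`. -/
noncomputable def Fmat (n r : ℕ) : ℕ :=
  Nat.card {F : Finset (Fin r → ℕ) //
    IsFerrers F ∧ mu r ⊆ F ∧ F.card = n ∧
      ∀ B : Set (Fin r), IsBlock (F \ mu r) B →
        ∃ a ∈ F \ mu r, SuppIn a B ∧ ¬ IsType1 a}

/-!
Each coordinate `i` is used by some point of `F \ μ_x`, and by downward closure also by a
point of `F \ μ_x` of the form `2 e_i` or `e_i + e_j`, whose support has at most two elements.
Hence the `m` points of `F \ μ_x` cover the `x` coordinates with at most `2m` support entries,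
so `x ≤ 2m`.
-/

open Finset

lemma card_mu (x : ℕ) : #(mu x) = x + 1 := by
  have hinj : Function.Injective fun i : Fin x => (Pi.single i 1 : Fin x → ℕ) := fun i j h => by
    simpa [Pi.single_apply] using congrFun h i
  rw [mu, card_insert_of_notMem, card_image_of_injective _ hinj, card_univ, Fintype.card_fin]
  simp [funext_iff, Pi.single_apply]

lemma sum_le_one_of_mem_mu {x : ℕ} {a : Fin x → ℕ} (ha : a ∈ mu x) : ∑ k, a k ≤ 1 := by
  simp only [mu, mem_insert, mem_image, mem_univ, true_and] at ha
  obtain rfl | ⟨i, rfl⟩ := ha <;> simp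

lemma exists_ne_ne_zero_of_notMem_mu {x : ℕ} {a : Fin x → ℕ} (ha : a ∉ mu x) {i : Fin x}
    (hai : a i = 1) : ∃ j ≠ i, a j ≠ 0 := by
  by_contra! h
  refine ha (mem_insert_of_mem (mem_image.2 ⟨i, mem_univ _, funext fun j => ?_⟩))
  by_cases hji : j = i
  · simp [hji, hai]
  · simp [hji, h j hji]

/-- Below a point outside `μ_x` using coordinate `i` lies `e_i + e_j` (`j ≠ i`) or `2 e_i`. -/
lemma exists_le_of_notMem_mu {x : ℕ} {a : Fin x → ℕ} (ha : a ∉ mu x) {i : Fin x}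
    (hai : a i ≠ 0) : ∃ b ≤ a, ∑ k, b k = 2 ∧ b i ≠ 0 ∧ #{k | b k ≠ 0} ≤ 2 := by
  rcases (Nat.one_le_iff_ne_zero.2 hai).eq_or_lt with h1 | h2
  · obtain ⟨j, hji, haj⟩ := exists_ne_ne_zero_of_notMem_mu ha h1.symm
    refine ⟨Pi.single i 1 + Pi.single j 1, fun k => ?_, by simp [sum_add_distrib],
      by simp [hji.symm], (card_le_card (t := {i, j}) fun k => ?_).trans card_le_two⟩
    · by_cases hki : k = i <;> by_cases hkj : k = j <;> simp_all; omega
    · by_cases hki : k = i <;> by_cases hkj : k = j <;> simp_all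
  · refine ⟨Pi.single i 2, fun k => ?_, by simp, by simp,
      (card_le_card (t := {i}) fun k => ?_).trans (by simp)⟩
    · by_cases hki : k = i <;> simp_all; omega
    · by_cases hki : k = i <;> simp_all

lemma exists_mem_sdiff_mu_of_rdim_eq {x : ℕ} {F : Finset (Fin x → ℕ)} (h : rdim F = x)
    (i : Fin x) : ∃ a ∈ F \ mu x, a i ≠ 0 := by
  by_contra hi
  have := Finite.card_subtype_lt (p := fun j => ∃ a ∈ F \ mu x, a j ≠ 0) hi
  rw [Nat.card_eq_fintype_card (α := Fin x), Fintype.card_fin] at this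
  exact this.ne h

lemma IsFerrers.mem_of_le {k : ℕ} {F : Finset (Fin k → ℕ)} (hF : IsFerrers F)
    {a b : Fin k → ℕ} (ha : a ∈ F) (hba : b ≤ a) : b ∈ F :=
  hF.2 a ha b hba

lemma IsFerrers.exists_mem_sdiff_mu_card_support_le_two {x : ℕ} {F : Finset (Fin x → ℕ)}
    (hF : IsFerrers F) {a : Fin x → ℕ} (ha : a ∈ F \ mu x) {i : Fin x} (hai : a i ≠ 0) :
    ∃ b ∈ F \ mu x, b i ≠ 0 ∧ #{k | b k ≠ 0} ≤ 2 := by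
  obtain ⟨haF, hamu⟩ := mem_sdiff.1 ha
  obtain ⟨b, hba, hsum, hbi, hb⟩ := exists_le_of_notMem_mu hamu hai
  refine ⟨b, mem_sdiff.2 ⟨hF.mem_of_le haF hba, fun hbmu => ?_⟩, hbi, hb⟩
  have := sum_le_one_of_mem_mu hbmu
  omega

lemma card_le_mul_card_of_forall_exists_ne_zero {ι : Type*} [Fintype ι] [DecidableEq ι]
    (σ : Finset (ι → ℕ)) (n : ℕ) (hcover : ∀ i, ∃ a ∈ σ, a i ≠ 0)
    (hsmall : ∀ a ∈ σ, #{k | a k ≠ 0} ≤ n) : Fintype.card ι ≤ n * #σ := by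
  have : (univ : Finset ι) ⊆ σ.biUnion fun a => {k | a k ≠ 0} := fun i _ => by
    obtain ⟨a, ha, hai⟩ := hcover i
    exact mem_biUnion.2 ⟨a, ha, by simpa using hai⟩
  calc Fintype.card ι = #(univ : Finset ι) := rfl
    _ ≤ #(σ.biUnion fun a => {k | a k ≠ 0}) := card_le_card this
    _ ≤ ∑ a ∈ σ, #{k | a k ≠ 0} := card_biUnion_le
    _ ≤ #σ * n := sum_le_card_nsmul _ _ _ hsmall
    _ = n * #σ := mul_comm _ _

lemma IsFerrers.le_two_mul_card_sdiff_mu {x : ℕ} {F : Finset (Fin x → ℕ)} (hF : IsFerrers F)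
    (h : rdim F = x) : x ≤ 2 * #(F \ mu x) := by
  calc x = Fintype.card (Fin x) := (Fintype.card_fin x).symm
    _ ≤ 2 * #{b ∈ F \ mu x | #{k | b k ≠ 0} ≤ 2} := by
      refine card_le_mul_card_of_forall_exists_ne_zero _ 2 (fun i => ?_)
        fun b hb => (mem_filter.1 hb).2
      obtain ⟨a, ha, hai⟩ := exists_mem_sdiff_mu_of_rdim_eq h i
      obtain ⟨b, hb, hbi, hb2⟩ := hF.exists_mem_sdiff_mu_card_support_le_two ha hai
      exact ⟨b, mem_filter.2 ⟨hb, hb2⟩, hbi⟩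
    _ ≤ 2 * #(F \ mu x) := Nat.mul_le_mul_left 2 (card_filter_le _ _)

/-- `c_{m,x} = 0` whenever `x > 2m`. -/
theorem statement5 (m x : ℕ) (h : 2 * m < x) : Cmat m x = 0 := by
  rw [Cmat, Nat.card_eq_zero]
  refine Or.inl ⟨fun ⟨F, hF, hmu, hcard, hrdim⟩ => ?_⟩
  have hσ : #(F \ mu x) = m := by
    rw [card_sdiff_of_subset hmu, hcard, card_mu]
    omega
  have := hF.le_two_mul_card_sdiff_mu hrdim
  omega
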